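/- Let G be a countable group, Λ < G a subgroup, and θ : Λ → G an injective homomorphism with Λ ≠ G and θ(Λ) ≠ G, and let Γ = HNN(G, Λ, θ). Then Λ is not co-amenable in Γ; i.e., there is no Γ-invariant finitely additive probability measure on the coset space Γ/Λ. -/

import Mathlib

/-!
Let `S ⊆ Γ/Λ` consist of the cosets of the elements with a reduced word `λ t⁻¹ g₁ ⋯` where
`λ ∈ Λ`; right multiplication by `G` only changes the last letter, so this is well defined.
Prepending `t⁻¹ g` to such a word keeps it reduced, so `t⁻¹ g S ⊆ S`. As the head of a reduced
word starting with `t⁻¹` is unique modulo `Λ`, the sets `S` and `x S` are disjoint for `x ∉ Λ`.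
An invariant mean therefore has `m S ≥ m (t⁻¹ S) + m (t⁻¹ x S) = 2 m S`, i.e. `m S = 0`.
On the other hand, for `y ∉ θ(Λ)` and `h` the head of `γ`, at most one of `h`, `y h` lies in
`θ(Λ)`, so `t⁻¹ γ` or `t⁻¹ y γ` has the reduced word `1 t⁻¹ ⋯`. Thus `Γ/Λ = t S ∪ y⁻¹ t S` and
`1 ≤ 2 m S`.
-/

/-- A subgroup `Λ` of `Γ` is co-amenable if there is a `Γ`-invariant finitely additive
probability measure on the left coset space `Γ/Λ`. -/
def CoAmenable {Γ : Type*} [Group Γ] (Λ : Subgroup Γ) : Prop :=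
  ∃ m : Set (Γ ⧸ Λ) → ℝ,
    m Set.univ = 1 ∧
    (∀ A : Set (Γ ⧸ Λ), 0 ≤ m A) ∧
    (∀ A B : Set (Γ ⧸ Λ), A ⊆ B → m A ≤ m B) ∧
    (∀ A B : Set (Γ ⧸ Λ), Disjoint A B → m (A ∪ B) = m A + m B) ∧
    (∀ (g : Γ) (A : Set (Γ ⧸ Λ)), m ((fun x => g • x) '' A) = m A)

open Pointwise

theorem not_coAmenable_of_pingPong {Γ : Type*} [Group Γ] {H : Subgroup Γ} (S : Set (Γ ⧸ H))
    (g₁ g₂ h₁ h₂ : Γ) (hS₁ : g₁ • S ⊆ S) (hS₂ : g₂ • S ⊆ S) (hdisj : Disjoint (g₁ • S) (g₂ • S))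
    (hcover : ∀ c : Γ ⧸ H, h₁ • c ∈ S ∨ h₂ • c ∈ S) : ¬ CoAmenable H := by
  rintro ⟨m, huniv, -, hmono, hadd, hinv⟩
  simp only [Set.image_smul] at hinv
  have hunion_le (U V : Set (Γ ⧸ H)) : m (U ∪ V) ≤ m U + m V := by
    rw [← Set.union_sdiff_self, hadd _ _ Set.disjoint_sdiff_right]
    exact add_le_add_right (hmono _ _ Set.sdiff_subset) _
  have hdouble_le : m S + m S ≤ m S := by
    simpa only [hadd _ _ hdisj, hinv] using hmono _ _ (Set.union_subset hS₁ hS₂)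
  have hcover' : Set.univ ⊆ h₁⁻¹ • S ∪ h₂⁻¹ • S := fun c _ => by
    simpa only [Set.mem_union, Set.mem_smul_set_iff_inv_smul_mem, inv_inv] using hcover c
  have hS_ge : 1 ≤ m S + m S := by
    calc (1 : ℝ) = m Set.univ := huniv.symm
      _ ≤ m (h₁⁻¹ • S ∪ h₂⁻¹ • S) := hmono _ _ hcover'
      _ ≤ m S + m S := by simpa only [hinv] using hunion_le (h₁⁻¹ • S) (h₂⁻¹ • S)
  linarith

namespace HNNExtension

open NormalWord

variable {G : Type*} [Group G] {A B : Subgroup G} {φ : A ≃* B}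

theorem exists_reducedWord_prod_eq (γ : HNNExtension G A B φ) :
    ∃ w : ReducedWord G A B, w.prod φ = γ := by
  obtain ⟨d⟩ := TransversalPair.nonempty G A B
  exact ⟨(NormalWord.equiv φ d γ).toReducedWord, (NormalWord.equiv φ d).symm_apply_apply γ⟩

/-- `γ ∈ A t⁻¹ ⋯`: some (equivalently, by `ReducedWord.map_fst_eq_and_of_prod_eq`, every)
reduced word for `γ` has its head in `A` and its first letter of the form `t⁻¹ g`. -/
def StartsWithInvT (γ : HNNExtension G A B φ) : Prop :=
  ∃ w : ReducedWord G A B, w.prod φ = γ ∧ w.head ∈ A ∧ w.toList.head?.map Prod.fst = some (-1)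

theorem StartsWithInvT.mul_of {γ : HNNExtension G A B φ} (hγ : StartsWithInvT γ) (g : G) :
    StartsWithInvT (γ * of g) := by
  obtain ⟨w, rfl, hhead, hfirst⟩ := hγ
  obtain hnil | ⟨L, ⟨u, h⟩, hL⟩ := w.toList.eq_nil_or_concat'
  · simp [hnil] at hfirst
  have hchain := w.chain
  rw [hL, List.isChain_append] at hchain
  -- the chain condition never looks at the `G`-part of the last letter
  have hchain' : (L ++ [(u, h * g)]).IsChain
      (fun a b => a.2 ∈ toSubgroup A B a.1 → a.1 = b.1) :=
    List.isChain_append.2 ⟨hchain.1, List.isChain_singleton _,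
      fun x hx _ hy => by
        obtain rfl := Option.mem_some_iff.1 hy
        exact hchain.2.2 x hx (u, h) rfl⟩
  refine ⟨⟨w.head, L ++ [(u, h * g)], hchain'⟩, ?_, hhead, ?_⟩
  · simp [ReducedWord.prod, hL, mul_assoc]
  · rw [hL] at hfirst
    cases L <;> simpa using hfirst

theorem startsWithInvT_invT_mul_of_mul_prod (g : G) (w : ReducedWord G A B)
    (hw : g * w.head ∈ B → ∀ u ∈ w.toList.head?.map Prod.fst, u = -1) :
    StartsWithInvT (t⁻¹ * of g * w.prod φ) := by
  have hchain : (((-1 : ℤˣ), g * w.head) :: w.toList).IsChain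
      (fun a b => a.2 ∈ toSubgroup A B a.1 → a.1 = b.1) :=
    List.isChain_cons.2 ⟨fun y hy hB => (hw hB y.1 (Option.mem_map_of_mem _ hy)).symm, w.chain⟩
  refine ⟨⟨1, ((-1 : ℤˣ), g * w.head) :: w.toList, hchain⟩, ?_, one_mem _, by simp⟩
  simp [ReducedWord.prod, mul_assoc]

theorem StartsWithInvT.invT_mul_of {γ : HNNExtension G A B φ} (hγ : StartsWithInvT γ) (g : G) :
    StartsWithInvT (t⁻¹ * of g * γ) := by
  obtain ⟨w, rfl, -, hfirst⟩ := hγ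
  exact startsWithInvT_invT_mul_of_mul_prod g w fun _ u hu => by simpa [hfirst] using hu.symm

theorem startsWithInvT_invT_mul_or {y : G} (hy : y ∉ B) (γ : HNNExtension G A B φ) :
    StartsWithInvT (t⁻¹ * γ) ∨ StartsWithInvT (t⁻¹ * of y * γ) := by
  obtain ⟨w, rfl⟩ := exists_reducedWord_prod_eq γ
  by_cases hhead : w.head ∈ B
  · refine .inr (startsWithInvT_invT_mul_of_mul_prod y w fun hyB => ?_)
    exact absurd (by simpa using mul_mem hyB (inv_mem hhead)) hy
  · left
    simpa using startsWithInvT_invT_mul_of_mul_prod (φ := φ) 1 w fun h1B =>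
      absurd (by simpa using h1B) hhead

theorem mem_of_startsWithInvT_of_mul {γ : HNNExtension G A B φ} {x : G}
    (hγ : StartsWithInvT γ) (hxγ : StartsWithInvT (of x * γ)) : x ∈ A := by
  obtain ⟨w, rfl, hhead, hfirst⟩ := hγ
  obtain ⟨w', hw', hhead', -⟩ := hxγ
  have hprod : (⟨x * w.head, w.toList, w.chain⟩ : ReducedWord G A B).prod φ = w'.prod φ := by
    rw [hw']; simp [ReducedWord.prod, mul_assoc]
  have hdiff := (ReducedWord.map_fst_eq_and_of_prod_eq φ hprod).2 (-1) (by simpa using hfirst)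
  rw [neg_neg, toSubgroup_one] at hdiff
  simpa using mul_mem (mul_mem hhead' (inv_mem hdiff)) (inv_mem hhead)

variable {H : Subgroup (HNNExtension G A B φ)}

def cosetsStartingWithInvT (H : Subgroup (HNNExtension G A B φ)) :
    Set (HNNExtension G A B φ ⧸ H) :=
  QuotientGroup.mk '' {γ | StartsWithInvT γ}

theorem mk_mem_cosetsStartingWithInvT_iff (hH : H ≤ (of : G →* HNNExtension G A B φ).range)
    (γ : HNNExtension G A B φ) : (γ : HNNExtension G A B φ ⧸ H) ∈ cosetsStartingWithInvT H ↔
      StartsWithInvT γ := by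
  refine ⟨?_, fun hγ => ⟨γ, hγ, rfl⟩⟩
  rintro ⟨γ', hγ', hmk⟩
  obtain ⟨g, hg⟩ := hH (QuotientGroup.eq.1 hmk)
  simpa [hg] using hγ'.mul_of g

theorem invT_mul_of_smul_cosetsStartingWithInvT_subset
    (hH : H ≤ (of : G →* HNNExtension G A B φ).range) (g : G) :
    (t⁻¹ * of g : HNNExtension G A B φ) • cosetsStartingWithInvT H ⊆
      cosetsStartingWithInvT H := by
  rintro _ ⟨_, ⟨γ, hγ, rfl⟩, rfl⟩
  dsimp only
  rw [MulAction.Quotient.smul_coe, smul_eq_mul, mk_mem_cosetsStartingWithInvT_iff hH]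
  exact hγ.invT_mul_of g

theorem disjoint_cosetsStartingWithInvT_of_smul
    (hH : H ≤ (of : G →* HNNExtension G A B φ).range) {x : G} (hx : x ∉ A) :
    Disjoint (cosetsStartingWithInvT H)
      ((of x : HNNExtension G A B φ) • cosetsStartingWithInvT H) := by
  refine Set.disjoint_left.2 ?_
  rintro _ ⟨γ, hγ, rfl⟩ hγx
  rw [Set.mem_smul_set_iff_inv_smul_mem, MulAction.Quotient.smul_coe, smul_eq_mul,
    mk_mem_cosetsStartingWithInvT_iff hH] at hγx
  exact hx (mem_of_startsWithInvT_of_mul hγx (by simpa using hγ))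

theorem invT_smul_or_invT_mul_of_smul_mem_cosetsStartingWithInvT
    (hH : H ≤ (of : G →* HNNExtension G A B φ).range) {y : G} (hy : y ∉ B)
    (c : HNNExtension G A B φ ⧸ H) :
    (t⁻¹ : HNNExtension G A B φ) • c ∈ cosetsStartingWithInvT H ∨
      (t⁻¹ * of y : HNNExtension G A B φ) • c ∈ cosetsStartingWithInvT H := by
  induction c using QuotientGroup.induction_on with | H γ => ?_
  simp only [MulAction.Quotient.smul_coe, smul_eq_mul, mk_mem_cosetsStartingWithInvT_iff hH]
  exact startsWithInvT_invT_mul_or hy γ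

end HNNExtension

open HNNExtension in
theorem stmt1_general {G : Type*} [Group G] (Λ B : Subgroup G) (θ : Λ ≃* B)
    (hΛ : Λ ≠ ⊤) (hB : B ≠ ⊤) :
    ¬ CoAmenable (Λ.map (HNNExtension.of : G →* HNNExtension G Λ B θ)) := by
  obtain ⟨x, hx⟩ := SetLike.exists_not_mem_of_ne_top Λ hΛ
  obtain ⟨y, hy⟩ := SetLike.exists_not_mem_of_ne_top B hB
  have hH := Subgroup.map_le_range (of : G →* HNNExtension G Λ B θ) Λ
  refine not_coAmenable_of_pingPong (cosetsStartingWithInvT _) t⁻¹ (t⁻¹ * of x) t⁻¹ (t⁻¹ * of y)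
    (by simpa using invT_mul_of_smul_cosetsStartingWithInvT_subset hH 1)
    (invT_mul_of_smul_cosetsStartingWithInvT_subset hH x) ?_
    (invT_smul_or_invT_mul_of_smul_mem_cosetsStartingWithInvT hH hy)
  rw [mul_smul, Set.disjoint_smul_set]
  exact disjoint_cosetsStartingWithInvT_of_smul hH hx

/-- Lemma 8.2(2): if `Λ ≠ G` and `θ(Λ) ≠ G`, then `Λ` is not co-amenable in the
HNN extension `Γ = HNN(G, Λ, θ)`. -/
theorem stmt1 {G : Type*} [Group G] [Countable G] (Λ B : Subgroup G) (θ : Λ ≃* B)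
    (hΛ : Λ ≠ ⊤) (hB : B ≠ ⊤) :
    ¬ CoAmenable (Λ.map (HNNExtension.of : G →* HNNExtension G Λ B θ)) :=
  stmt1_general Λ B θ hΛ hB
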